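/- arXiv:1202.1242 — 2 statements merged into one kernel-verified Lean document; each statement's English description precedes it below -/
import Mathlib

section
/- The Kullback-Leibler divergence of N(0,Σ₂) from N(0,Σ₁), where Σ_j = Σ_ν λ_ν θ_ν^{(j)} (θ_ν^{(j)})^T + I with each {θ_ν^{(j)}}_ν orthonormal, equals (1/2) Σ_{ν=1}^M η(λ_ν)λ_ν − (1/2) Σ_{ν=1}^M Σ_{ν'=1}^M η(λ_ν) λ_{ν'} |⟨θ_{ν'}^{(1)}, θ_ν^{(2)}⟩|². -/
/-!
Orthonormality of the spike directions makes `Σ = θᵀ diag(λ) θ + 1` easy to invert and to take the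
determinant of: `Σ⁻¹ = 1 - θᵀ diag(η(λ)) θ`, and Sylvester's identity `det(1 + AB) = det(1 + BA)`
gives `det Σ = ∏ (1 + λ_ν)`. The two models share their spikes, so the log-determinant term
vanishes. The trace `tr(Σ₂⁻¹ Σ₁) - N` then splits into `∑ λ - ∑ η(λ)` and a cross term that
depends only on the Gram matrix `θ₂ θ₁ᵀ` of the two families of directions.
-/

/-- KL divergence of `N(0,B)` from `N(0,A)`: `(1/2)[tr(B⁻¹A) − N + log(det B / det A)]`. -/
noncomputable def klGauss {N : ℕ} (A B : Matrix (Fin N) (Fin N) ℝ) : ℝ :=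
  (1 / 2) * ((B⁻¹ * A).trace - N + Real.log (B.det / A.det))

open Matrix Finset

namespace Matrix

variable {m n R : Type*}

section CommRing

variable [CommRing R]

def spikedCov [Fintype m] [DecidableEq m] [DecidableEq n] (θ : Matrix m n R) (d : m → R) :
    Matrix n n R :=
  θᵀ * diagonal d * θ + 1

theorem sum_smul_vecMulVec_self [Fintype m] [DecidableEq m] (θ : Matrix m n R) (d : m → R) :
    ∑ ν, d ν • vecMulVec (θ ν) (θ ν) = θᵀ * diagonal d * θ := by
  ext i j
  simp [mul_apply, vecMulVec_apply, Matrix.sum_apply, diagonal, mul_comm, mul_left_comm]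

theorem mul_transpose_self_eq_one [Fintype n] [DecidableEq m] {θ : Matrix m n R}
    (h : ∀ ν ν', θ ν ⬝ᵥ θ ν' = if ν = ν' then 1 else 0) : θ * θᵀ = 1 := by
  ext ν ν'
  rw [mul_apply', one_apply]
  exact h ν ν'

theorem det_spikedCov [Fintype m] [Fintype n] [DecidableEq m] [DecidableEq n]
    {θ : Matrix m n R} (hθ : θ * θᵀ = 1) (d : m → R) :
    (spikedCov θ d).det = ∏ ν, (1 + d ν) := by
  rw [spikedCov, Matrix.mul_assoc, det_mul_add_one_comm, Matrix.mul_assoc, hθ, Matrix.mul_one,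
    ← diagonal_one, diagonal_add, det_diagonal]
  simp only [add_comm]

theorem transpose_mul_diagonal_mul_sq [Fintype m] [Fintype n] [DecidableEq m]
    {θ : Matrix m n R} (hθ : θ * θᵀ = 1) (d e : m → R) :
    θᵀ * diagonal d * θ * (θᵀ * diagonal e * θ) = θᵀ * diagonal (d * e) * θ := by
  rw [show θᵀ * diagonal d * θ * (θᵀ * diagonal e * θ)
      = θᵀ * diagonal d * (θ * θᵀ) * diagonal e * θ by simp only [Matrix.mul_assoc],
    hθ, Matrix.mul_one, Matrix.mul_assoc θᵀ, diagonal_mul_diagonal]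
  rfl

theorem trace_transpose_mul_diagonal_mul [Fintype m] [Fintype n] [DecidableEq m]
    {θ : Matrix m n R} (hθ : θ * θᵀ = 1) (d : m → R) :
    (θᵀ * diagonal d * θ).trace = ∑ ν, d ν := by
  rw [trace_mul_cycle, hθ, Matrix.one_mul, trace_diagonal]

theorem trace_diagonal_mul_mul_diagonal_mul_transpose [Fintype m] [Fintype n] [DecidableEq m]
    [DecidableEq n] (C : Matrix m n R) (d : m → R) (e : n → R) :
    (diagonal d * C * diagonal e * Cᵀ).trace = ∑ i, ∑ j, d i * e j * C i j ^ 2 := by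
  simp only [trace, diag, mul_apply, diagonal_apply, transpose_apply, ite_mul, zero_mul,
    mul_ite, mul_zero, Finset.sum_ite_eq, Finset.sum_ite_eq', Finset.mem_univ, if_true]
  exact sum_congr rfl fun i _ => sum_congr rfl fun j _ => by ring

theorem trace_transpose_mul_diagonal_mul_mul [Fintype m] [Fintype n] [DecidableEq m]
    (θ₁ θ₂ : Matrix m n R) (d e : m → R) :
    (θ₂ᵀ * diagonal e * θ₂ * (θ₁ᵀ * diagonal d * θ₁)).trace
      = ∑ i, ∑ j, e i * d j * (θ₂ * θ₁ᵀ) i j ^ 2 := by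
  rw [← trace_diagonal_mul_mul_diagonal_mul_transpose, transpose_mul, transpose_transpose]
  simp only [Matrix.mul_assoc]
  rw [trace_mul_comm θ₂ᵀ]
  simp only [Matrix.mul_assoc]

end CommRing

theorem inv_spikedCov [Field R] [Fintype m] [Fintype n] [DecidableEq m] [DecidableEq n]
    {θ : Matrix m n R} (hθ : θ * θᵀ = 1) {d : m → R} (hd : ∀ ν, 1 + d ν ≠ 0) :
    (spikedCov θ d)⁻¹ = 1 - θᵀ * diagonal (fun ν => d ν / (1 + d ν)) * θ := by
  set e : m → R := fun ν => d ν / (1 + d ν)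
  have hde : diagonal d = diagonal (d * e) + diagonal e := by
    rw [diagonal_add]
    congr 1
    funext ν
    simp only [e, Pi.mul_apply]
    field_simp [hd ν]
    ring
  refine inv_eq_right_inv ?_
  rw [spikedCov, add_mul, one_mul, mul_sub, mul_one, transpose_mul_diagonal_mul_sq hθ]
  nth_rw 1 [hde]
  rw [Matrix.mul_add, Matrix.add_mul]
  abel

theorem klGauss_spikedCov {m : Type*} [Fintype m] [DecidableEq m] {N : ℕ}
    {θ₁ θ₂ : Matrix m (Fin N) ℝ} (h₁ : θ₁ * θ₁ᵀ = 1) (h₂ : θ₂ * θ₂ᵀ = 1) {l : m → ℝ}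
    (hl : ∀ ν, 1 + l ν ≠ 0) :
    klGauss (spikedCov θ₁ l) (spikedCov θ₂ l)
      = (1 / 2) * ∑ ν, l ν / (1 + l ν) * l ν
        - (1 / 2) * ∑ ν, ∑ ν', l ν / (1 + l ν) * l ν' * (θ₂ * θ₁ᵀ) ν ν' ^ 2 := by
  have hdet : (spikedCov θ₂ l).det / (spikedCov θ₁ l).det = 1 := by
    rw [det_spikedCov h₁, det_spikedCov h₂, div_self (prod_ne_zero_iff.mpr fun ν _ => hl ν)]
  have hη : ∑ ν, l ν - ∑ ν, l ν / (1 + l ν) = ∑ ν, l ν / (1 + l ν) * l ν := by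
    rw [← sum_sub_distrib]
    refine sum_congr rfl fun ν _ => ?_
    field_simp [hl ν]
    ring
  rw [klGauss, hdet, Real.log_one, inv_spikedCov h₂ hl, spikedCov, sub_mul, one_mul,
    Matrix.mul_add, Matrix.mul_one, trace_sub, trace_add, trace_add, trace_one, Fintype.card_fin,
    trace_transpose_mul_diagonal_mul h₁, trace_transpose_mul_diagonal_mul h₂,
    trace_transpose_mul_diagonal_mul_mul]
  linear_combination (1 / 2 : ℝ) * hη

end Matrix

theorem kl_spiked_models_general (N M : ℕ)
    (l : Fin M → ℝ) (hl : ∀ ν, 0 < l ν)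
    (θ₁ θ₂ : Fin M → Fin N → ℝ)
    (horth₁ : ∀ ν ν', dotProduct (θ₁ ν) (θ₁ ν') = if ν = ν' then 1 else 0)
    (horth₂ : ∀ ν ν', dotProduct (θ₂ ν) (θ₂ ν') = if ν = ν' then 1 else 0) :
    klGauss (∑ ν, l ν • Matrix.vecMulVec (θ₁ ν) (θ₁ ν) + 1)
        (∑ ν, l ν • Matrix.vecMulVec (θ₂ ν) (θ₂ ν) + 1)
      = (1 / 2) * ∑ ν, (l ν / (1 + l ν)) * l ν
        - (1 / 2) * ∑ ν, ∑ ν', (l ν / (1 + l ν)) * l ν' *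
            (dotProduct (θ₁ ν') (θ₂ ν)) ^ 2 := by
  rw [sum_smul_vecMulVec_self (θ₁ : Matrix (Fin M) (Fin N) ℝ) l,
    sum_smul_vecMulVec_self (θ₂ : Matrix (Fin M) (Fin N) ℝ) l]
  refine (klGauss_spikedCov (mul_transpose_self_eq_one horth₁) (mul_transpose_self_eq_one horth₂)
    fun ν => (add_pos one_pos (hl ν)).ne').trans ?_
  simp only [dotProduct_comm (θ₁ _)]
  rfl

theorem kl_spiked_models (N M : ℕ) (hM : 1 ≤ M) (hMN : M ≤ N)
    (l : Fin M → ℝ) (hl : ∀ ν, 0 < l ν)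
    (θ₁ θ₂ : Fin M → Fin N → ℝ)
    (horth₁ : ∀ ν ν', dotProduct (θ₁ ν) (θ₁ ν') = if ν = ν' then 1 else 0)
    (horth₂ : ∀ ν ν', dotProduct (θ₂ ν) (θ₂ ν') = if ν = ν' then 1 else 0) :
    klGauss (∑ ν, l ν • Matrix.vecMulVec (θ₁ ν) (θ₁ ν) + 1)
        (∑ ν, l ν • Matrix.vecMulVec (θ₂ ν) (θ₂ ν) + 1)
      = (1 / 2) * ∑ ν, (l ν / (1 + l ν)) * l ν
        - (1 / 2) * ∑ ν, ∑ ν', (l ν / (1 + l ν)) * l ν' *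
            (dotProduct (θ₁ ν') (θ₂ ν)) ^ 2 :=
  kl_spiked_models_general N M l hl θ₁ θ₂ horth₁ horth₂
end

section
/- In the rank-one case M = 1: for unit vectors θ^{(1)}, θ^{(2)} ∈ R^N and λ > 0, the KL divergence of N(0, λ θ^{(2)}(θ^{(2)})^T + I) from N(0, λ θ^{(1)}(θ^{(1)})^T + I) equals (1/2) h(λ) (1 − ⟨θ^{(1)}, θ^{(2)}⟩²), where h(λ) = λ²/(1+λ). -/
namespace Matrix

variable {R n : Type*} [Fintype n] [DecidableEq n]

theorem det_smul_vecMulVec_add_one [CommRing R] (c : R) (u v : n → R) :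
    (c • vecMulVec u v + 1).det = 1 + c * (v ⬝ᵥ u) := by
  rw [← smul_vecMulVec, vecMulVec_eq Unit, add_comm, det_one_add_replicateCol_mul_replicateRow,
    dotProduct_smul, smul_eq_mul]

variable [Field R]

theorem inv_smul_vecMulVec_add_one {c : R} {u v : n → R} (h : 1 + c * (v ⬝ᵥ u) ≠ 0) :
    (c • vecMulVec u v + 1)⁻¹ = 1 - (c / (1 + c * (v ⬝ᵥ u))) • vecMulVec u v := by
  set s := c / (1 + c * (v ⬝ᵥ u)) with hs
  have hsq : vecMulVec u v * vecMulVec u v = (v ⬝ᵥ u) • vecMulVec u v := by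
    rw [vecMulVec_mul_vecMulVec, vecMulVec_smul]
  have hcoef : c - s - c * s * (v ⬝ᵥ u) = 0 := by
    rw [hs]; field_simp; ring
  refine inv_eq_right_inv ?_
  calc (c • vecMulVec u v + 1) * (1 - s • vecMulVec u v)
      = 1 + (c - s - c * s * (v ⬝ᵥ u)) • vecMulVec u v := by
        simp only [Matrix.mul_sub, Matrix.add_mul, Matrix.mul_one, Matrix.one_mul,
          Matrix.mul_smul, Matrix.smul_mul, hsq, smul_smul]
        module
    _ = 1 := by rw [hcoef, zero_smul, add_zero]

theorem trace_inv_smul_vecMulVec_add_one_mul {a b : R} {u w : n → R}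
    (h : 1 + a * (u ⬝ᵥ u) ≠ 0) :
    ((a • vecMulVec u u + 1)⁻¹ * (b • vecMulVec w w + 1)).trace
      = Fintype.card n + b * (w ⬝ᵥ w)
        - a / (1 + a * (u ⬝ᵥ u)) * (u ⬝ᵥ u + b * (u ⬝ᵥ w) ^ 2) := by
  rw [inv_smul_vecMulVec_add_one h]
  simp only [Matrix.sub_mul, Matrix.one_mul, Matrix.mul_add, Matrix.mul_one, Matrix.smul_mul,
    Matrix.mul_smul, vecMulVec_mul_vecMulVec, vecMulVec_smul, trace_sub, trace_add, trace_smul,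
    trace_one, trace_vecMulVec, smul_eq_mul]
  ring

end Matrix

theorem kl_rank_one_spiked (N : ℕ) (l : ℝ) (hl : 0 < l)
    (θ₁ θ₂ : Fin N → ℝ)
    (h₁ : dotProduct θ₁ θ₁ = 1) (h₂ : dotProduct θ₂ θ₂ = 1) :
    klGauss (l • Matrix.vecMulVec θ₁ θ₁ + 1) (l • Matrix.vecMulVec θ₂ θ₂ + 1)
      = (1 / 2) * (l ^ 2 / (1 + l)) * (1 - (dotProduct θ₁ θ₂) ^ 2) := by
  have hl₁ : 1 + l * (θ₂ ⬝ᵥ θ₂) ≠ 0 := by rw [h₂]; positivity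
  rw [klGauss, Matrix.trace_inv_smul_vecMulVec_add_one_mul hl₁,
    Matrix.det_smul_vecMulVec_add_one, Matrix.det_smul_vecMulVec_add_one, h₁, h₂,
    div_self (by positivity), Real.log_one, dotProduct_comm θ₂ θ₁, Fintype.card_fin]
  field_simp
  ring
end
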